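/- arXiv:1607.00362 — 3 statements merged into one kernel-verified Lean document; each statement's English description precedes it below -/
import Mathlib

section
/- Iterated Laplacian of the phase-space Gaussian, multi-dimensional Laguerre formula: Let ε > 0, d ≥ 1 and N ∈ ℕ. Then for all z = (q,p) ∈ ℝ^{2d}, (−(ε/2) Δ)^N W_0(z) = N! · W_0(z) · Σ_{n=0}^{N} binom(N+d−1, n+d−1) Σ_{k ∈ ℕ^d, |k| = n} Π_{j=1}^d L_{k_j}(ρ_j(z)), where Δ is the Laplacian on ℝ^{2d} and ρ_j(q,p) = (2/ε)(q_j² + p_j²). -/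
/-!
Write `ρ_j = 2 (q_j² + p_j²) / ε` and `F_k = W_0 ∏_j L_{k_j}(ρ_j)` for `k ∈ ℕ^d`, so that
`W_0 = F_0`.
On the factor `e^{-(q_j² + p_j²)/ε} L_{k_j}(ρ_j)` of `F_k`, Laguerre's differential equation turns
`-(ε/2) (∂²_{q_j} + ∂²_{p_j})` into multiplication by `4 k_j + 2 - ρ_j`, and the three-term
recurrence `x L_n = (2n+1) L_n - (n+1) L_{n+1} - n L_{n-1}` rewrites `-(ε/2) Δ F_k` as a
combination of `F_k` and the `F_{k ± e_j}`. Summing over the shells `|k| = n`, the shell sums `S_n`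
satisfy `-(ε/2) Δ S_n = (n+1) S_{n+1} + (2n+d) S_n + (n+d-1) S_{n-1}`, and the coefficients
`N! binom(N+d-1, n+d-1)` solve the resulting recursion in `N` with initial value `S_0 = W_0`.
-/

open MeasureTheory Finset

noncomputable section

/-- Phase space `ℝ^d × ℝ^d`. -/
abbrev PS (d : ℕ) := (Fin d → ℝ) × (Fin d → ℝ)

/-- The `n`-th Laguerre polynomial. -/
def laguerre (n : ℕ) (x : ℝ) : ℝ :=
  ∑ j ∈ Finset.range (n + 1), (n.choose (n - j) : ℝ) * (-x) ^ j / (Nat.factorial j)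

/-- The Laplacian on phase space `ℝ^{2d}`. -/
def phaseLap {d : ℕ} {F : Type*} [NormedAddCommGroup F] [NormedSpace ℝ F]
    (f : PS d → F) : PS d → F := fun z =>
  (∑ i, iteratedDeriv 2 (fun t => f (Function.update z.1 i t, z.2)) (z.1 i)) +
  (∑ i, iteratedDeriv 2 (fun t => f (z.1, Function.update z.2 i t)) (z.2 i))

/-- The phase-space Gaussian `W_0(z) = (πε)^{−d} e^{−|z|²/ε}`. -/
def gaussW0 {d : ℕ} (ε : ℝ) : PS d → ℝ := fun z =>
  (((Real.pi * ε) ^ d : ℝ))⁻¹ * Real.exp (-(∑ i, (z.1 i ^ 2 + z.2 i ^ 2)) / ε)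

open Polynomial Nat

namespace LaguerreGaussian

variable {d : ℕ}

lemma cast_choose_succ_mul (n k : ℕ) :
    (n.choose (k + 1) : ℝ) * (k + 1) = n.choose k * ((n : ℝ) - k) := by
  rcases le_or_gt k n with h | h
  · have hc := congrArg (Nat.cast (R := ℝ)) (Nat.choose_succ_right_eq n k)
    push_cast [Nat.cast_sub h] at hc
    exact hc
  · simp [Nat.choose_eq_zero_of_lt h, Nat.choose_eq_zero_of_lt (Nat.lt_succ_of_lt h)]

lemma cast_choose_mul_succ (n k : ℕ) :
    (n.choose k : ℝ) * (n + 1) = (n + 1).choose k * ((n : ℝ) + 1 - k) := by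
  have h := cast_choose_succ_mul (n + 1) k
  have h' : ((n + 1 : ℕ) : ℝ) * n.choose k = (n + 1).choose (k + 1) * (k + 1) := by
    exact_mod_cast Nat.add_one_mul_choose_eq n k
  push_cast at h h'
  linarith

lemma cast_mul_choose_pred (n k : ℕ) :
    (n : ℝ) * (n - 1).choose k = n.choose k * ((n : ℝ) - k) := by
  rcases n with _ | n
  · rcases k with _ | k <;> simp
  · simpa [mul_comm] using cast_choose_mul_succ n k

def laguerrePoly (n : ℕ) : ℝ[X] :=
  ∑ j ∈ range (n + 1), C ((-1 : ℝ) ^ j * n.choose j / j !) * X ^ j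

lemma coeff_laguerrePoly (n k : ℕ) :
    (laguerrePoly n).coeff k = (-1) ^ k * n.choose k / k ! := by
  rw [laguerrePoly, finsetSum_coeff]
  simp only [coeff_C_mul, coeff_X_pow, mul_ite, mul_one, mul_zero]
  rw [Finset.sum_ite_eq]
  split_ifs with h
  · rfl
  · simp [Nat.choose_eq_zero_of_lt (by simpa using h : n < k)]

lemma laguerre_eq_eval (n : ℕ) (x : ℝ) : laguerre n x = (laguerrePoly n).eval x := by
  rw [laguerre, laguerrePoly, eval_finsetSum]
  refine Finset.sum_congr rfl fun j hj => ?_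
  rw [Nat.choose_symm (Nat.lt_succ_iff.mp (Finset.mem_range.mp hj))]
  simp only [eval_mul, eval_C, eval_pow, eval_X]
  rw [neg_pow]
  ring

lemma succ_sq_mul_coeff_laguerrePoly (n k : ℕ) :
    ((k : ℝ) + 1) ^ 2 * (laguerrePoly n).coeff (k + 1)
      = ((k : ℝ) - n) * (laguerrePoly n).coeff k := by
  have h := cast_choose_succ_mul n k
  rw [coeff_laguerrePoly, coeff_laguerrePoly, Nat.factorial_succ]
  have : (k ! : ℝ) ≠ 0 := by positivity
  push_cast
  field_simp
  linear_combination -(-1 : ℝ) ^ k * h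

theorem laguerrePoly_ode (n : ℕ) :
    X * derivative (derivative (laguerrePoly n)) + (1 - X) * derivative (laguerrePoly n)
      + C (n : ℝ) * laguerrePoly n = 0 := by
  ext k
  rcases k with _ | k
  · have h := succ_sq_mul_coeff_laguerrePoly n 0
    simp [sub_mul, coeff_derivative] at h ⊢
    linarith
  · have h := succ_sq_mul_coeff_laguerrePoly n (k + 1)
    simp [sub_mul, coeff_derivative, coeff_X_mul] at h ⊢
    linear_combination h

theorem X_mul_laguerrePoly (n : ℕ) :
    X * laguerrePoly n = C (2 * n + 1 : ℝ) * laguerrePoly n - C (n + 1 : ℝ) * laguerrePoly (n + 1)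
      - C (n : ℝ) * laguerrePoly (n - 1) := by
  ext k
  rcases k with _ | m
  · simp [coeff_laguerrePoly]
    ring
  · have h := cast_choose_succ_mul n m
    have hy := cast_mul_choose_pred n (m + 1)
    have hP : ((n + 1).choose (m + 1) : ℝ) = n.choose m + n.choose (m + 1) := by
      exact_mod_cast Nat.choose_succ_succ n m
    simp only [coeff_X_mul, coeff_sub, coeff_C_mul, coeff_laguerrePoly, Nat.factorial_succ]
    have : (m ! : ℝ) ≠ 0 := by positivity
    push_cast at hy ⊢
    field_simp
    linear_combination (-1 : ℝ) ^ m * (-((n : ℝ) + 1) * hP - hy + h)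

lemma mul_laguerre (n : ℕ) (x : ℝ) :
    x * laguerre n x
      = (2 * n + 1) * laguerre n x - (n + 1) * laguerre (n + 1) x - n * laguerre (n - 1) x := by
  simpa [laguerre_eq_eval] using congrArg (eval x) (X_mul_laguerrePoly n)

lemma iteratedDeriv_two_comp_sq_add {g g' g'' : ℝ → ℝ} (hg : ∀ s, HasDerivAt g (g' s) s)
    (hg' : ∀ s, HasDerivAt g' (g'' s) s) (c t : ℝ) :
    iteratedDeriv 2 (fun t => g (t ^ 2 + c)) t
      = 2 * g' (t ^ 2 + c) + 4 * t ^ 2 * g'' (t ^ 2 + c) := by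
  have hsq : ∀ t : ℝ, HasDerivAt (fun t => t ^ 2 + c) (2 * t) t := fun t => by
    simpa using (hasDerivAt_pow 2 t).add_const c
  have h1 : deriv (fun t => g (t ^ 2 + c)) = fun t => g' (t ^ 2 + c) * (2 * t) :=
    funext fun t => ((hg _).comp t (hsq t)).deriv
  have h2 : HasDerivAt (fun t => g' (t ^ 2 + c) * (2 * t))
      (g'' (t ^ 2 + c) * (2 * t) * (2 * t) + g' (t ^ 2 + c) * 2) t :=
    ((hg' _).comp t (hsq t)).mul (by simpa using (hasDerivAt_id t).const_mul 2)
  rw [iteratedDeriv_succ, iteratedDeriv_one, h1, h2.deriv]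
  ring

lemma iteratedDeriv_two_radial {g g' g'' : ℝ → ℝ} (hg : ∀ s, HasDerivAt g (g' s) s)
    (hg' : ∀ s, HasDerivAt g' (g'' s) s) (q p : ℝ) :
    iteratedDeriv 2 (fun t => g (t ^ 2 + p ^ 2)) q + iteratedDeriv 2 (fun t => g (q ^ 2 + t ^ 2)) p
      = 4 * g' (q ^ 2 + p ^ 2) + 4 * (q ^ 2 + p ^ 2) * g'' (q ^ 2 + p ^ 2) := by
  simp only [add_comm (q ^ 2), iteratedDeriv_two_comp_sq_add hg hg']
  ring

def gaussLaguerre (ε : ℝ) (P : ℝ[X]) (s : ℝ) : ℝ := Real.exp (-s / ε) * P.eval (2 / ε * s)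

lemma hasDerivAt_gaussLaguerre (ε : ℝ) (P : ℝ[X]) (s : ℝ) :
    HasDerivAt (gaussLaguerre ε P) (ε⁻¹ * gaussLaguerre ε (C 2 * derivative P - P) s) s := by
  have hexp : HasDerivAt (fun s => Real.exp (-s / ε)) (Real.exp (-s / ε) * (-1 / ε)) s :=
    by simpa using ((hasDerivAt_id s).neg.div_const ε).exp
  have hP : HasDerivAt (fun s => P.eval (2 / ε * s)) (P.derivative.eval (2 / ε * s) * (2 / ε)) s :=
    (P.hasDerivAt _).comp s (by simpa using (hasDerivAt_id s).const_mul (2 / ε))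
  refine (hexp.mul hP).congr_deriv ?_
  simp only [gaussLaguerre, eval_sub, eval_mul, eval_C]
  ring

lemma laplacian_gaussLaguerre {ε : ℝ} (hε : ε ≠ 0) (n : ℕ) (q p : ℝ) :
    -(ε / 2) * (iteratedDeriv 2 (fun t => gaussLaguerre ε (laguerrePoly n) (t ^ 2 + p ^ 2)) q
      + iteratedDeriv 2 (fun t => gaussLaguerre ε (laguerrePoly n) (q ^ 2 + t ^ 2)) p)
      = (4 * n + 2 - 2 / ε * (q ^ 2 + p ^ 2))
          * gaussLaguerre ε (laguerrePoly n) (q ^ 2 + p ^ 2) := by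
  rw [iteratedDeriv_two_radial (hasDerivAt_gaussLaguerre ε _)
    fun s => (hasDerivAt_gaussLaguerre ε _ s).const_mul ε⁻¹]
  have hode := congrArg (eval (2 / ε * (q ^ 2 + p ^ 2))) (laguerrePoly_ode n)
  simp only [eval_add, eval_mul, eval_sub, eval_X, eval_one, eval_C, eval_zero] at hode
  simp only [gaussLaguerre, eval_sub, eval_mul, eval_C, derivative_sub, derivative_mul,
    derivative_C, zero_mul, zero_add]
  generalize hx : 2 / ε * (q ^ 2 + p ^ 2) = x at hode ⊢
  have hs : q ^ 2 + p ^ 2 = ε * x / 2 := by rw [← hx]; field_simp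
  rw [hs]
  field_simp
  linear_combination -16 * hode

lemma prod_apply_update {ι α β : Type*} [Fintype ι] [DecidableEq ι] [CommMonoid β]
    (f : ι → α → β) (x : ι → α) (i : ι) (a : α) :
    ∏ j, f j (Function.update x i a j) = (∏ j ∈ univ.erase i, f j (x j)) * f i a := by
  rw [← Finset.prod_erase_mul _ _ (mem_univ i), Function.update_self]
  congr 1
  refine Finset.prod_congr rfl fun j hj => ?_
  rw [Function.update_of_ne (ne_of_mem_erase hj)]

lemma phaseLap_mul_prod (c : ℝ) (G : Fin d → ℝ → ℝ → ℝ) (z : PS d) :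
    phaseLap (fun w => c * ∏ j, G j (w.1 j) (w.2 j)) z
      = c * ∑ i, (iteratedDeriv 2 (fun t => G i t (z.2 i)) (z.1 i)
          + iteratedDeriv 2 (fun t => G i (z.1 i) t) (z.2 i))
          * ∏ j ∈ univ.erase i, G j (z.1 j) (z.2 j) := by
  simp only [phaseLap, prod_apply_update (fun j a => G j a (z.2 j)),
    prod_apply_update (fun j a => G j (z.1 j) a), ← mul_assoc, iteratedDeriv_const_mul_field,
    Finset.mul_sum, ← Finset.sum_add_distrib]
  refine Finset.sum_congr rfl fun i _ => ?_
  ring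

lemma phaseLap_fun_sum {ι F : Type*} [NormedAddCommGroup F] [NormedSpace ℝ F] {s : Finset ι}
    {f : ι → PS d → F} (hf : ∀ i ∈ s, ContDiff ℝ 2 (f i)) :
    phaseLap (fun z => ∑ i ∈ s, f i z) = fun z => ∑ i ∈ s, phaseLap (f i) z := by
  funext z
  have hq : ∀ i ∈ s, ∀ j : Fin d, ContDiff ℝ 2 fun t => f i (Function.update z.1 j t, z.2) :=
    fun i hi j => (hf i hi).comp ((contDiff_update 2 z.1 j).prodMk contDiff_const)
  have hp : ∀ i ∈ s, ∀ j : Fin d, ContDiff ℝ 2 fun t => f i (z.1, Function.update z.2 j t) :=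
    fun i hi j => (hf i hi).comp (contDiff_const.prodMk (contDiff_update 2 z.2 j))
  simp only [phaseLap]
  rw [Finset.sum_congr rfl fun j _ => iteratedDeriv_fun_sum fun i hi => (hq i hi j).contDiffAt,
    Finset.sum_congr rfl fun j _ => iteratedDeriv_fun_sum fun i hi => (hp i hi j).contDiffAt,
    Finset.sum_comm, Finset.sum_comm (s := univ), ← Finset.sum_add_distrib]

lemma phaseLap_const_mul (c : ℝ) (f : PS d → ℝ) :
    phaseLap (fun z => c * f z) = fun z => c * phaseLap f z := by
  funext z
  simp only [phaseLap, iteratedDeriv_const_mul_field, ← Finset.mul_sum, mul_add]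

def gaussLaguerreProd (ε : ℝ) (k : Fin d → ℕ) (z : PS d) : ℝ :=
  gaussW0 ε z * ∏ j, laguerre (k j) (2 / ε * (z.1 j ^ 2 + z.2 j ^ 2))

lemma gaussLaguerreProd_eq_mul_prod (ε : ℝ) (k : Fin d → ℕ) :
    gaussLaguerreProd ε k
      = fun z => ((Real.pi * ε) ^ d)⁻¹
          * ∏ j, gaussLaguerre ε (laguerrePoly (k j)) (z.1 j ^ 2 + z.2 j ^ 2) := by
  funext z
  simp only [gaussLaguerreProd, gaussW0, gaussLaguerre, Finset.prod_mul_distrib, laguerre_eq_eval,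
    ← Real.exp_sum, neg_div, Finset.sum_div, Finset.sum_neg_distrib, mul_assoc]

lemma contDiff_gaussLaguerreProd (ε : ℝ) (k : Fin d → ℕ) {n : WithTop ℕ∞} :
    ContDiff ℝ n (gaussLaguerreProd ε k) := by
  have hP (P : ℝ[X]) : ContDiff ℝ n fun x => P.eval x := by
    simpa only [Polynomial.coe_aeval_eq_eval] using P.contDiff_aeval (𝕜 := ℝ) n
  rw [gaussLaguerreProd_eq_mul_prod]
  unfold gaussLaguerre
  fun_prop

def scaledLap (ε : ℝ) (f : PS d → ℝ) : PS d → ℝ := fun w => -(ε / 2) * phaseLap f w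

lemma scaledLap_gaussLaguerreProd_eq_sum_mul {ε : ℝ} (hε : ε ≠ 0) (k : Fin d → ℕ) (z : PS d) :
    scaledLap ε (gaussLaguerreProd ε k) z
      = ∑ i, (4 * k i + 2 - 2 / ε * (z.1 i ^ 2 + z.2 i ^ 2)) * gaussLaguerreProd ε k z := by
  have h := phaseLap_mul_prod ((Real.pi * ε) ^ d)⁻¹
    (fun j q p => gaussLaguerre ε (laguerrePoly (k j)) (q ^ 2 + p ^ 2)) z
  simp only [← gaussLaguerreProd_eq_mul_prod] at h
  simp only [scaledLap]
  rw [h, gaussLaguerreProd_eq_mul_prod]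
  beta_reduce
  rw [Finset.mul_sum, Finset.mul_sum]
  refine Finset.sum_congr rfl fun i _ => ?_
  rw [← Finset.prod_erase_mul _ _ (mem_univ i)]
  linear_combination ((Real.pi * ε) ^ d)⁻¹ *
    (∏ j ∈ univ.erase i, gaussLaguerre ε (laguerrePoly (k j)) (z.1 j ^ 2 + z.2 j ^ 2))
    * laplacian_gaussLaguerre hε (k i) (z.1 i) (z.2 i)

lemma gaussLaguerreProd_update (ε : ℝ) (k : Fin d → ℕ) (i : Fin d) (m : ℕ) (z : PS d) :
    gaussLaguerreProd ε (Function.update k i m) z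
      = gaussW0 ε z * (∏ j ∈ univ.erase i, laguerre (k j) (2 / ε * (z.1 j ^ 2 + z.2 j ^ 2)))
        * laguerre m (2 / ε * (z.1 i ^ 2 + z.2 i ^ 2)) := by
  rw [gaussLaguerreProd, mul_assoc,
    prod_apply_update (fun j n => laguerre n (2 / ε * (z.1 j ^ 2 + z.2 j ^ 2)))]

lemma mul_gaussLaguerreProd (ε : ℝ) (k : Fin d → ℕ) (i : Fin d) (z : PS d) :
    2 / ε * (z.1 i ^ 2 + z.2 i ^ 2) * gaussLaguerreProd ε k z
      = (2 * k i + 1) * gaussLaguerreProd ε k z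
        - (k i + 1) * gaussLaguerreProd ε (Function.update k i (k i + 1)) z
        - k i * gaussLaguerreProd ε (Function.update k i (k i - 1)) z := by
  have hk : gaussLaguerreProd ε k z = gaussLaguerreProd ε (Function.update k i (k i)) z := by
    rw [Function.update_eq_self]
  simp only [hk, gaussLaguerreProd_update]
  linear_combination
    gaussW0 ε z * (∏ j ∈ univ.erase i, laguerre (k j) (2 / ε * (z.1 j ^ 2 + z.2 j ^ 2)))
    * mul_laguerre (k i) (2 / ε * (z.1 i ^ 2 + z.2 i ^ 2))

theorem scaledLap_gaussLaguerreProd {ε : ℝ} (hε : ε ≠ 0) (k : Fin d → ℕ) (z : PS d) :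
    scaledLap ε (gaussLaguerreProd ε k) z
      = ∑ i, ((k i + 1) * gaussLaguerreProd ε (Function.update k i (k i + 1)) z
          + (2 * k i + 1) * gaussLaguerreProd ε k z
          + k i * gaussLaguerreProd ε (Function.update k i (k i - 1)) z) := by
  rw [scaledLap_gaussLaguerreProd_eq_sum_mul hε]
  refine Finset.sum_congr rfl fun i _ => ?_
  linear_combination -mul_gaussLaguerreProd ε k i z

lemma sum_update_add {ι : Type*} [Fintype ι] [DecidableEq ι] (k : ι → ℕ) (i : ι) (m : ℕ) :
    (∑ j, Function.update k i m j) + k i = (∑ j, k j) + m := by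
  rw [Finset.sum_update_of_mem (mem_univ i),
    Finset.sum_eq_add_sum_sdiff_singleton_of_mem (mem_univ i)]
  ring

lemma sum_antidiagonalTuple_succ_nsmul {M : Type*} [AddCommMonoid M] (i : Fin d) (n : ℕ)
    (f : (Fin d → ℕ) → M) :
    ∑ k ∈ antidiagonalTuple d (n + 1), k i • f k
      = ∑ k ∈ antidiagonalTuple d n, (k i + 1) • f (Function.update k i (k i + 1)) := by
  symm
  refine Finset.sum_bij_ne_zero (fun k _ _ => Function.update k i (k i + 1)) ?_ ?_ ?_ ?_
  · intro k hk _
    have := sum_update_add k i (k i + 1)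
    rw [Finset.Nat.mem_antidiagonalTuple] at hk ⊢
    omega
  · intro k₁ _ _ k₂ _ _ h
    have h' := congrArg (fun k => Function.update k i (k i - 1)) h
    simp only [Function.update_idem, Function.update_self] at h'
    simpa only [Nat.add_sub_cancel, Function.update_eq_self] using h'
  · intro k hk hne
    have hki : k i ≠ 0 := fun h => hne (by rw [h, zero_smul])
    refine ⟨Function.update k i (k i - 1), ?_, ?_, ?_⟩
    · have := sum_update_add k i (k i - 1)
      rw [Finset.Nat.mem_antidiagonalTuple] at hk ⊢
      omega
    · simpa [Nat.sub_add_cancel (Nat.one_le_iff_ne_zero.mpr hki)] using hne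
    · simp [Nat.sub_add_cancel (Nat.one_le_iff_ne_zero.mpr hki)]
  · intro k _ _
    rw [Function.update_self]

lemma sum_sum_update_succ_mul (n : ℕ) (g : (Fin d → ℕ) → ℝ) :
    ∑ k ∈ antidiagonalTuple d n, ∑ i, ((k i : ℝ) + 1) * g (Function.update k i (k i + 1))
      = (n + 1) * ∑ k ∈ antidiagonalTuple d (n + 1), g k := by
  have h := fun i => sum_antidiagonalTuple_succ_nsmul i n g
  simp only [nsmul_eq_mul, Nat.cast_add, Nat.cast_one] at h
  rw [Finset.sum_comm, Finset.sum_congr rfl fun i _ => (h i).symm, Finset.sum_comm, Finset.mul_sum]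
  refine Finset.sum_congr rfl fun k hk => ?_
  rw [← Finset.sum_mul, ← Nat.cast_sum, Finset.Nat.mem_antidiagonalTuple.mp hk]
  push_cast
  ring

lemma sum_sum_update_pred_mul (n : ℕ) (g : (Fin d → ℕ) → ℝ) :
    ∑ k ∈ antidiagonalTuple d (n + 1), ∑ i, (k i : ℝ) * g (Function.update k i (k i - 1))
      = (n + d) * ∑ k ∈ antidiagonalTuple d n, g k := by
  have h := fun i => sum_antidiagonalTuple_succ_nsmul i n
    fun k => g (Function.update k i (k i - 1))
  simp only [nsmul_eq_mul, Nat.cast_add, Nat.cast_one, Function.update_idem, Function.update_self,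
    Nat.add_sub_cancel, Function.update_eq_self] at h
  rw [Finset.sum_comm, Finset.sum_congr rfl fun i _ => h i, Finset.sum_comm, Finset.mul_sum]
  refine Finset.sum_congr rfl fun k hk => ?_
  rw [← Finset.sum_mul, Finset.sum_add_distrib, ← Nat.cast_sum,
    Finset.Nat.mem_antidiagonalTuple.mp hk]
  simp

def gaussLaguerreShell (ε : ℝ) (d n : ℕ) (z : PS d) : ℝ :=
  ∑ k ∈ antidiagonalTuple d n, gaussLaguerreProd ε k z

lemma gaussLaguerreShell_zero (ε : ℝ) : gaussLaguerreShell ε d 0 = gaussW0 ε := by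
  funext z
  simp [gaussLaguerreShell, gaussLaguerreProd, laguerre, Finset.Nat.antidiagonalTuple_zero_right]

lemma contDiff_gaussLaguerreShell (ε : ℝ) (n : ℕ) {m : WithTop ℕ∞} :
    ContDiff ℝ m (gaussLaguerreShell ε d n) :=
  ContDiff.sum fun k _ => contDiff_gaussLaguerreProd ε k

lemma scaledLap_gaussLaguerreShell {ε : ℝ} (hε : ε ≠ 0) (n : ℕ) (z : PS d) :
    scaledLap ε (gaussLaguerreShell ε d n) z
      = (n + 1) * gaussLaguerreShell ε d (n + 1) z + (2 * n + d) * gaussLaguerreShell ε d n z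
        + ∑ k ∈ antidiagonalTuple d n, ∑ i,
            (k i : ℝ) * gaussLaguerreProd ε (Function.update k i (k i - 1)) z := by
  have hdiag : ∑ k ∈ antidiagonalTuple d n, ∑ i, (2 * (k i : ℝ) + 1) * gaussLaguerreProd ε k z
      = (2 * n + d) * gaussLaguerreShell ε d n z := by
    rw [gaussLaguerreShell, Finset.mul_sum]
    refine Finset.sum_congr rfl fun k hk => ?_
    rw [← Finset.sum_mul, Finset.sum_add_distrib, ← Finset.mul_sum, ← Nat.cast_sum,
      Finset.Nat.mem_antidiagonalTuple.mp hk]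
    simp
  have hsum : scaledLap ε (gaussLaguerreShell ε d n) z
      = ∑ k ∈ antidiagonalTuple d n, scaledLap ε (gaussLaguerreProd ε k) z := by
    simp only [scaledLap]
    rw [show gaussLaguerreShell ε d n
        = fun w => ∑ k ∈ antidiagonalTuple d n, gaussLaguerreProd ε k w from rfl,
      phaseLap_fun_sum fun k _ => contDiff_gaussLaguerreProd ε k, Finset.mul_sum]
  have hup := sum_sum_update_succ_mul n fun k => gaussLaguerreProd ε k z
  beta_reduce at hup
  simp only [hsum, scaledLap_gaussLaguerreProd hε, Finset.sum_add_distrib, hdiag, hup,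
    gaussLaguerreShell]

lemma scaledLap_sum_shells {ε : ℝ} (hε : ε ≠ 0) (a : ℕ → ℝ) (M : ℕ) (ha : ∀ n ≥ M, a n = 0)
    (z : PS d) :
    scaledLap ε (fun w => ∑ n ∈ range (M + 1), a n * gaussLaguerreShell ε d n w) z
      = ∑ n ∈ range (M + 1), (n * a (n - 1) + (2 * n + d) * a n + (n + d) * a (n + 1))
          * gaussLaguerreShell ε d n z := by
  have hlin : scaledLap ε (fun w => ∑ n ∈ range (M + 1), a n * gaussLaguerreShell ε d n w) z
      = ∑ n ∈ range (M + 1), a n * scaledLap ε (gaussLaguerreShell ε d n) z := by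
    simp only [scaledLap]
    rw [phaseLap_fun_sum fun n _ => contDiff_const.mul (contDiff_gaussLaguerreShell ε n)]
    simp only [phaseLap_const_mul, Finset.mul_sum, mul_left_comm]
  have hup : ∑ n ∈ range (M + 1), a n * ((n + 1) * gaussLaguerreShell ε d (n + 1) z)
      = ∑ n ∈ range (M + 1), n * a (n - 1) * gaussLaguerreShell ε d n z := by
    rw [Finset.sum_range_succ, ha M le_rfl, Finset.sum_range_succ']
    simp only [Nat.cast_add, Nat.cast_one, Nat.add_sub_cancel, CharP.cast_eq_zero, zero_mul,
      add_zero]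
    exact Finset.sum_congr rfl fun n _ => by ring
  have hdown : ∑ n ∈ range (M + 1), a n * ∑ k ∈ antidiagonalTuple d n, ∑ i,
        (k i : ℝ) * gaussLaguerreProd ε (Function.update k i (k i - 1)) z
      = ∑ n ∈ range (M + 1), (n + d) * a (n + 1) * gaussLaguerreShell ε d n z := by
    rw [Finset.sum_range_succ', Finset.sum_range_succ, ha (M + 1) (by omega)]
    simp only [Finset.Nat.antidiagonalTuple_zero_right, Finset.sum_singleton, Pi.zero_apply,
      CharP.cast_eq_zero, zero_mul, Finset.sum_const_zero, mul_zero, add_zero]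
    refine Finset.sum_congr rfl fun n _ => ?_
    have h := sum_sum_update_pred_mul n fun k => gaussLaguerreProd ε k z
    beta_reduce at h
    rw [h, gaussLaguerreShell]
    ring
  rw [hlin,
    Finset.sum_congr rfl fun n _ => by rw [scaledLap_gaussLaguerreShell hε, mul_add, mul_add],
    Finset.sum_add_distrib, Finset.sum_add_distrib, hup, hdown, ← Finset.sum_add_distrib,
    ← Finset.sum_add_distrib]
  exact Finset.sum_congr rfl fun n _ => by ring

-- `e` plays the role of `d - 1`, which keeps truncated subtraction out of the recursion.
def shellCoeff (e N n : ℕ) : ℝ := N ! * (N + e).choose (n + e)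

lemma shellCoeff_eq_zero {e N n : ℕ} (h : N < n) : shellCoeff e N n = 0 := by
  simp [shellCoeff, Nat.choose_eq_zero_of_lt (by omega : N + e < n + e)]

lemma shellCoeff_succ (e N n : ℕ) :
    n * shellCoeff e N (n - 1) + (2 * n + (e + 1 : ℕ)) * shellCoeff e N n
      + (n + (e + 1 : ℕ)) * shellCoeff e N (n + 1) = shellCoeff e (N + 1) n := by
  have hP (m k : ℕ) : ((m + 1).choose (k + 1) : ℝ) = m.choose k + m.choose (k + 1) := by
    exact_mod_cast Nat.choose_succ_succ m k
  rcases n with _ | n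
  · have h1 := cast_choose_succ_mul (N + e + 1) e
    have h2 := hP (N + e) e
    simp only [shellCoeff, Nat.factorial_succ, Nat.zero_add, show N + 1 + e = N + e + 1 by omega,
      show 1 + e = e + 1 by omega]
    push_cast at h1 h2 ⊢
    linear_combination (N ! : ℝ) * h1 - (N ! : ℝ) * ((e : ℝ) + 1) * h2
  · have h1 := cast_choose_succ_mul (N + e) (n + e)
    have h2 := cast_choose_succ_mul (N + e) (n + e + 1)
    have h3 := hP (N + e) (n + e)
    simp only [shellCoeff, Nat.add_sub_cancel, Nat.factorial_succ,
      show N + 1 + e = N + e + 1 by omega, show n + 1 + e = n + e + 1 by omega,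
      show n + 1 + 1 + e = n + e + 1 + 1 by omega]
    push_cast at h1 h2 h3 ⊢
    linear_combination (N ! : ℝ) * h1 + (N ! : ℝ) * h2 - ((N : ℝ) + 1) * (N ! : ℝ) * h3

theorem iterate_scaledLap_gaussW0 {ε : ℝ} (hε : ε ≠ 0) (e N : ℕ) :
    (scaledLap ε)^[N] (gaussW0 ε)
      = fun z => ∑ n ∈ range (N + 1), shellCoeff e N n * gaussLaguerreShell ε (e + 1) n z := by
  induction N with
  | zero =>
    funext z
    simp [shellCoeff, gaussLaguerreShell_zero]
  | succ N ih =>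
    have hext : (fun z => ∑ n ∈ range (N + 1), shellCoeff e N n * gaussLaguerreShell ε (e + 1) n z)
        = fun z => ∑ n ∈ range (N + 2), shellCoeff e N n * gaussLaguerreShell ε (e + 1) n z := by
      simp [Finset.sum_range_succ _ (N + 1), shellCoeff_eq_zero (Nat.lt_succ_self N)]
    funext z
    rw [Function.iterate_succ_apply', ih, hext,
      scaledLap_sum_shells hε _ (N + 1) fun n hn => shellCoeff_eq_zero (by omega)]
    simp only [shellCoeff_succ]

end LaguerreGaussian

/-- Iterated Laplacian of the phase-space Gaussian: the multi-dimensional Laguerre formula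
`(−(ε/2)Δ)^N W_0 = N! W_0 Σ_{n≤N} binom(N+d−1, n+d−1) Σ_{|k|=n} Π_j L_{k_j}(ρ_j)`. -/
theorem iterated_laplacian_gaussian_multidim
    (ε : ℝ) (hε : 0 < ε) (d : ℕ) (hd : 1 ≤ d) (N : ℕ) (z : PS d) :
    ((fun f : PS d → ℝ => fun w => (-(ε / 2)) * phaseLap f w)^[N] (gaussW0 ε)) z =
      (Nat.factorial N : ℝ) * gaussW0 ε z *
        ∑ n ∈ Finset.range (N + 1), ((N + d - 1).choose (n + d - 1) : ℝ) *
          ∑ k ∈ Finset.Nat.antidiagonalTuple d n,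
            ∏ j, laguerre (k j) (2 / ε * (z.1 j ^ 2 + z.2 j ^ 2)) := by
  obtain ⟨e, rfl⟩ : ∃ e, d = e + 1 := ⟨d - 1, by omega⟩
  change (LaguerreGaussian.scaledLap ε)^[N] (gaussW0 ε) z = _
  rw [LaguerreGaussian.iterate_scaledLap_gaussW0 hε.ne' e N, Finset.mul_sum]
  refine Finset.sum_congr rfl fun n _ => ?_
  rw [show N + (e + 1) - 1 = N + e by omega, show n + (e + 1) - 1 = n + e by omega]
  simp only [LaguerreGaussian.shellCoeff, LaguerreGaussian.gaussLaguerreShell,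
    LaguerreGaussian.gaussLaguerreProd, ← Finset.mul_sum]
  ring
end
end

section
/- Iterated Laplacian of the phase-space Gaussian, one-dimensional case: Let ε > 0 and d = 1. Then for all N ∈ ℕ and all z = (q,p) ∈ ℝ², (−(ε/2) Δ)^N G(z) = N! · G(z) · Σ_{n=0}^{N} binom(N, n) L_n(ρ(z)), where G(q,p) = (πε)^{−1} e^{−(q²+p²)/ε}, Δ = ∂²/∂q² + ∂²/∂p², and ρ(q,p) = (2/ε)(q² + p²). -/
open Finset

noncomputable section

/-- The Laplacian `∂²/∂q² + ∂²/∂p²` on `ℝ²`. -/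
def lap2 (f : ℝ × ℝ → ℝ) : ℝ × ℝ → ℝ := fun z =>
  iteratedDeriv 2 (fun t => f (t, z.2)) z.1 + iteratedDeriv 2 (fun t => f (z.1, t)) z.2

/-- The phase-space Gaussian `G(q,p) = (πε)^{−1} e^{−(q²+p²)/ε}` on `ℝ²`. -/
def gauss2 (ε : ℝ) : ℝ × ℝ → ℝ := fun z =>
  (Real.pi * ε)⁻¹ * Real.exp (-(z.1 ^ 2 + z.2 ^ 2) / ε)

/-! In the variable `y = (q² + p²)/ε` a radial function `k(y)` satisfies
`-(ε/2) Δ k(y) = -2 (k'(y) + y k''(y))`. Conjugating by the Gaussian `G = (πε)⁻¹ e^{-y}` therefore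
turns `-(ε/2) Δ` into a second-order operator on polynomials in `y`, and comparing coefficients
shows that it raises the Laguerre polynomials: `L_n ↦ 2(n+1) L_{n+1}`. Hence
`(-(ε/2) Δ)^N G = 2^N N! G L_N(y)`, and since `ρ = 2y` the multiplication formula
`∑_n C(N,n) L_n(2y) = 2^N L_N(y)` gives the claim. -/

open Polynomial

lemma choose_three_term (N m : ℕ) :
    (m + 2) * N.choose (m + 2) + (2 * m + 3) * N.choose (m + 1) + (m + 1) * N.choose m
      = (N + 1) * (N + 1).choose (m + 1) := by
  have h₁ := Nat.add_one_mul_choose_eq N m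
  have h₂ := Nat.add_one_mul_choose_eq N (m + 1)
  rw [Nat.choose_succ_succ'] at h₁ h₂ ⊢
  linarith

lemma sum_range_choose_mul_choose {N j : ℕ} (hj : j ≤ N) :
    ∑ n ∈ range (N + 1), N.choose n * n.choose j = N.choose j * 2 ^ (N - j) := by
  obtain ⟨i, rfl⟩ := Nat.exists_eq_add_of_le hj
  rw [show j + i + 1 = j + (i + 1) by omega, sum_range_add, Nat.add_sub_cancel_left,
    ← Nat.sum_range_choose, mul_sum]
  have hlow : ∀ n ∈ range j, (j + i).choose n * n.choose j = 0 := fun n hn => by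
    rw [Nat.choose_eq_zero_of_lt (mem_range.1 hn), mul_zero]
  rw [sum_eq_zero hlow, zero_add]
  refine sum_congr rfl fun k _ => ?_
  rw [Nat.choose_mul (Nat.le_add_right j k), Nat.add_sub_cancel_left, Nat.add_sub_cancel_left]

def laguerrePoly (n : ℕ) : ℝ[X] :=
  ∑ j ∈ range (n + 1), monomial j ((-1) ^ j * n.choose j / j.factorial)

lemma coeff_laguerrePoly (n j : ℕ) :
    (laguerrePoly n).coeff j = (-1) ^ j * n.choose j / j.factorial := by
  rw [laguerrePoly, finsetSum_coeff]
  simp only [coeff_monomial]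
  rw [sum_ite_eq' (range (n + 1)) j]
  split_ifs with hj
  · rfl
  · rw [Nat.choose_eq_zero_of_lt (by simpa using hj)]
    simp

lemma eval_laguerrePoly (n : ℕ) (x : ℝ) : (laguerrePoly n).eval x = laguerre n x := by
  rw [laguerrePoly, eval_finsetSum, laguerre]
  refine sum_congr rfl fun j hj => ?_
  rw [eval_monomial, Nat.choose_symm (mem_range_succ_iff.1 hj), neg_pow]
  ring

lemma laguerre_eq_sum_range {n N : ℕ} (hn : n ≤ N) (x : ℝ) :
    laguerre n x = ∑ j ∈ range (N + 1), (n.choose j : ℝ) * (-x) ^ j / j.factorial := by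
  calc laguerre n x = ∑ j ∈ range (n + 1), (n.choose j : ℝ) * (-x) ^ j / j.factorial :=
        sum_congr rfl fun j hj => by rw [Nat.choose_symm (mem_range_succ_iff.1 hj)]
    _ = _ := sum_subset (range_subset_range.2 (by omega)) fun j _ hj => by
        rw [Nat.choose_eq_zero_of_lt (by simpa using hj)]
        simp

lemma sum_choose_mul_laguerre_two_mul (N : ℕ) (y : ℝ) :
    ∑ n ∈ range (N + 1), (N.choose n : ℝ) * laguerre n (2 * y) = 2 ^ N * laguerre N y := by
  calc ∑ n ∈ range (N + 1), (N.choose n : ℝ) * laguerre n (2 * y)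
      = ∑ j ∈ range (N + 1), (∑ n ∈ range (N + 1), N.choose n * n.choose j : ℕ)
          * ((-(2 * y)) ^ j / j.factorial) := by
        simp_rw [Nat.cast_sum, Nat.cast_mul, sum_mul]
        rw [sum_comm]
        refine sum_congr rfl fun n hn => ?_
        rw [laguerre_eq_sum_range (mem_range_succ_iff.1 hn), mul_sum]
        refine sum_congr rfl fun j _ => by ring
    _ = ∑ j ∈ range (N + 1), 2 ^ N * ((N.choose j : ℝ) * (-y) ^ j / j.factorial) := by
        refine sum_congr rfl fun j hj => ?_
        have hj := mem_range_succ_iff.1 hj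
        have hpow : (2 : ℝ) ^ (N - j) * 2 ^ j = 2 ^ N := by rw [← pow_add, Nat.sub_add_cancel hj]
        rw [sum_range_choose_mul_choose hj, ← mul_neg, mul_pow, ← hpow]
        push_cast
        ring
    _ = 2 ^ N * laguerre N y := by rw [← mul_sum, laguerre_eq_sum_range le_rfl]

/-- `-(ε/2) Δ` conjugated by the Gaussian, acting on polynomials in `y = (q² + p²)/ε`. -/
def gaussConjLaplacian (Q : ℝ[X]) : ℝ[X] :=
  C 2 * ((1 - X) * Q + (C 2 * X - 1) * derivative Q - X * derivative (derivative Q))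

lemma gaussConjLaplacian_C_mul (c : ℝ) (Q : ℝ[X]) :
    gaussConjLaplacian (C c * Q) = C c * gaussConjLaplacian Q := by
  simp only [gaussConjLaplacian, derivative_C_mul]
  ring

lemma gaussConjLaplacian_laguerrePoly (n : ℕ) :
    gaussConjLaplacian (laguerrePoly n) = C (2 * ((n : ℝ) + 1)) * laguerrePoly (n + 1) := by
  ext k
  simp only [gaussConjLaplacian, sub_mul, one_mul, mul_assoc, coeff_C_mul, coeff_sub, coeff_add]
  cases k with
  | zero =>
    simp [coeff_derivative, coeff_laguerrePoly, add_comm]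
  | succ m =>
    simp only [coeff_X_mul, coeff_derivative, coeff_laguerrePoly]
    have h : ((m + 2) * n.choose (m + 2) + (2 * m + 3) * n.choose (m + 1) + (m + 1) * n.choose m : ℝ)
        = (n + 1) * (n + 1).choose (m + 1) := by exact_mod_cast choose_three_term n m
    simp only [Nat.factorial_succ, pow_succ]
    push_cast
    field_simp
    linear_combination -h

lemma hasDerivAt_comp_mul_sq_add {k k' : ℝ → ℝ} (hk : ∀ x, HasDerivAt k (k' x) x)
    (a b t : ℝ) :
    HasDerivAt (fun t => k (a * t ^ 2 + b)) (2 * a * t * k' (a * t ^ 2 + b)) t := by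
  refine ((hk _).comp t (((hasDerivAt_pow 2 t).const_mul a).add_const b)).congr_deriv ?_
  norm_num
  ring

lemma iteratedDeriv_two_comp_mul_sq_add {k k' k'' : ℝ → ℝ} (hk : ∀ x, HasDerivAt k (k' x) x)
    (hk' : ∀ x, HasDerivAt k' (k'' x) x) (a b t : ℝ) :
    iteratedDeriv 2 (fun t => k (a * t ^ 2 + b)) t
      = 2 * a * k' (a * t ^ 2 + b) + 4 * a ^ 2 * t ^ 2 * k'' (a * t ^ 2 + b) := by
  have hd : deriv (fun t => k (a * t ^ 2 + b)) = fun t => 2 * a * t * k' (a * t ^ 2 + b) :=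
    funext fun t => (hasDerivAt_comp_mul_sq_add hk a b t).deriv
  rw [iteratedDeriv_succ, iteratedDeriv_one, hd]
  have h := ((hasDerivAt_id t).const_mul (2 * a)).mul (hasDerivAt_comp_mul_sq_add hk' a b t)
  refine (h.congr_deriv ?_).deriv
  simp only [id_eq]
  ring

lemma lap2_comp_mul_sq_add_sq {k k' k'' : ℝ → ℝ} (hk : ∀ x, HasDerivAt k (k' x) x)
    (hk' : ∀ x, HasDerivAt k' (k'' x) x) (a : ℝ) (z : ℝ × ℝ) :
    lap2 (fun w => k (a * (w.1 ^ 2 + w.2 ^ 2))) z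
      = 4 * a * (k' (a * (z.1 ^ 2 + z.2 ^ 2))
          + a * (z.1 ^ 2 + z.2 ^ 2) * k'' (a * (z.1 ^ 2 + z.2 ^ 2))) := by
  have h₁ : (fun t => k (a * (t ^ 2 + z.2 ^ 2))) = fun t => k (a * t ^ 2 + a * z.2 ^ 2) := by
    simp only [mul_add]
  have h₂ : (fun t => k (a * (z.1 ^ 2 + t ^ 2))) = fun t => k (a * t ^ 2 + a * z.1 ^ 2) := by
    simp only [mul_add, add_comm]
  have e₁ : a * z.1 ^ 2 + a * z.2 ^ 2 = a * (z.1 ^ 2 + z.2 ^ 2) := by ring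
  have e₂ : a * z.2 ^ 2 + a * z.1 ^ 2 = a * (z.1 ^ 2 + z.2 ^ 2) := by ring
  rw [lap2]
  simp only [h₁, h₂, iteratedDeriv_two_comp_mul_sq_add hk hk', e₁, e₂]
  ring

lemma hasDerivAt_exp_neg_mul_eval (Q : ℝ[X]) (y : ℝ) :
    HasDerivAt (fun y => Real.exp (-y) * Q.eval y)
      (Real.exp (-y) * (derivative Q - Q).eval y) y := by
  refine ((Real.hasDerivAt_exp _).comp y (hasDerivAt_neg y)).mul (Q.hasDerivAt y) |>.congr_deriv ?_
  simp only [Function.comp_apply, eval_sub]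
  ring

lemma neg_half_mul_lap2_gauss2_mul_eval {ε : ℝ} (hε : ε ≠ 0) (Q : ℝ[X]) (z : ℝ × ℝ) :
    -(ε / 2) * lap2 (fun w => gauss2 ε w * Q.eval (ε⁻¹ * (w.1 ^ 2 + w.2 ^ 2))) z
      = gauss2 ε z * (gaussConjLaplacian Q).eval (ε⁻¹ * (z.1 ^ 2 + z.2 ^ 2)) := by
  set c := (Real.pi * ε)⁻¹
  have hG : (fun w => gauss2 ε w * Q.eval (ε⁻¹ * (w.1 ^ 2 + w.2 ^ 2)))
      = fun w => (fun y => c * (Real.exp (-y) * Q.eval y)) (ε⁻¹ * (w.1 ^ 2 + w.2 ^ 2)) := by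
    funext w
    rw [gauss2, neg_div, div_eq_inv_mul, mul_assoc]
  have hk := fun y => (hasDerivAt_exp_neg_mul_eval Q y).const_mul c
  have hk' := fun y => (hasDerivAt_exp_neg_mul_eval (derivative Q - Q) y).const_mul c
  rw [hG, lap2_comp_mul_sq_add_sq hk hk']
  simp only [gauss2, gaussConjLaplacian, c, eval_sub, eval_add, eval_mul, eval_C, eval_X, eval_one,
    derivative_sub, div_eq_inv_mul]
  field_simp
  ring

lemma iterate_neg_half_mul_lap2_gauss2 {ε : ℝ} (hε : ε ≠ 0) (N : ℕ) :
    (fun f : ℝ × ℝ → ℝ => fun w => (-(ε / 2)) * lap2 f w)^[N] (gauss2 ε)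
      = fun w => 2 ^ N * N.factorial * gauss2 ε w * laguerre N (ε⁻¹ * (w.1 ^ 2 + w.2 ^ 2)) := by
  induction N with
  | zero => funext w; simp [laguerre]
  | succ N ih =>
    have hpoly : (fun w => 2 ^ N * N.factorial * gauss2 ε w * laguerre N (ε⁻¹ * (w.1 ^ 2 + w.2 ^ 2)))
        = fun w => gauss2 ε w
            * (C (2 ^ N * N.factorial : ℝ) * laguerrePoly N).eval (ε⁻¹ * (w.1 ^ 2 + w.2 ^ 2)) := by
      funext w
      rw [eval_mul, eval_C, eval_laguerrePoly]
      ring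
    rw [Function.iterate_succ_apply', ih, hpoly]
    funext w
    rw [neg_half_mul_lap2_gauss2_mul_eval hε, gaussConjLaplacian_C_mul,
      gaussConjLaplacian_laguerrePoly, eval_mul, eval_mul, eval_C, eval_C, eval_laguerrePoly,
      Nat.factorial_succ]
    push_cast
    ring

/-- Iterated Laplacian of the phase-space Gaussian in one dimension:
`(−(ε/2)Δ)^N G = N! G Σ_{n≤N} binom(N,n) L_n(ρ)` with `ρ(q,p) = (2/ε)(q²+p²)`. -/
theorem iterated_laplacian_gaussian_onedim
    (ε : ℝ) (hε : 0 < ε) (N : ℕ) (z : ℝ × ℝ) :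
    ((fun f : ℝ × ℝ → ℝ => fun w => (-(ε / 2)) * lap2 f w)^[N] (gauss2 ε)) z =
      (Nat.factorial N : ℝ) * gauss2 ε z *
        ∑ n ∈ Finset.range (N + 1), (N.choose n : ℝ) *
          laguerre n (2 / ε * (z.1 ^ 2 + z.2 ^ 2)) := by
  rw [iterate_neg_half_mul_lap2_gauss2 hε.ne',
    show 2 / ε * (z.1 ^ 2 + z.2 ^ 2) = 2 * (ε⁻¹ * (z.1 ^ 2 + z.2 ^ 2)) by ring,
    sum_choose_mul_laguerre_two_mul]
  ring
end
end

section
/- Laguerre polynomial identity: For every n ∈ ℕ and every x ∈ ℝ, (2 − x) L_n(x) − 4x L_n''(x) + 4(x − 1) L_n'(x) = (1 + 2n) L_n(x) + (n+1) L_{n+1}(x) + n L_{n−1}(x), where L_n' and L_n'' denote the first and second derivatives of L_n. -/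
open Finset

noncomputable section

namespace LaguerreAux

open Polynomial

def L (n : ℕ) : Polynomial ℝ :=
  ∑ j ∈ Finset.range (n + 1), Polynomial.C ((-1)^j * (n.choose j : ℝ) / (Nat.factorial j)) * Polynomial.X ^ j

lemma coeff_L (n k : ℕ) : (L n).coeff k = (-1)^k * (n.choose k : ℝ) / (Nat.factorial k) := by
  unfold L
  rw [Polynomial.finset_sum_coeff]
  simp only [Polynomial.coeff_C_mul, Polynomial.coeff_X_pow, mul_ite, mul_one, mul_zero]
  rw [Finset.sum_ite_eq (Finset.range (n+1)) k]
  split_ifs with h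
  · rfl
  · rw [Nat.choose_eq_zero_of_lt (by simpa using h)]
    simp

lemma hA (n j : ℕ) : ((n.choose (j+1)):ℝ) = ((n:ℝ) - j) * n.choose j / ((j:ℝ)+1) := by
  rw [eq_div_iff (by positivity)]
  rcases le_or_gt j n with h | h
  · have := Nat.choose_succ_right_eq n j
    have h2 : ((n - j : ℕ) : ℝ) = (n:ℝ) - j := by
      push_cast [Nat.cast_sub h]; ring
    calc ((n.choose (j+1)):ℝ) * ((j:ℝ)+1) = ((n.choose (j+1) * (j+1) : ℕ) : ℝ) := by push_cast; ring
      _ = ((n.choose j * (n - j) : ℕ) : ℝ) := by rw [this]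
      _ = ((n:ℝ) - j) * n.choose j := by push_cast [h2]; ring
  · rw [Nat.choose_eq_zero_of_lt h, Nat.choose_eq_zero_of_lt (by omega)]
    simp

lemma hB (m j : ℕ) : ((m.choose j):ℝ) = ((j:ℝ)+1) * (m+1).choose (j+1) / ((m:ℝ)+1) := by
  rw [eq_div_iff (by positivity)]
  have := Nat.add_one_mul_choose_eq m j
  calc ((m.choose j):ℝ) * ((m:ℝ)+1) = (((m+1) * m.choose j : ℕ) : ℝ) := by push_cast; ring
    _ = (((m+1).choose (j+1) * (j+1) : ℕ) : ℝ) := by rw [← this]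
    _ = ((j:ℝ)+1) * (m+1).choose (j+1) := by push_cast; ring

lemma key (m : ℕ) :
    (C 2 - X) * L (m+1) - C 4 * (X * derivative (derivative (L (m+1)))) +
      C 4 * ((X - C 1) * derivative (L (m+1))) =
    C (1 + 2*((m:ℝ)+1)) * L (m+1) + C ((m:ℝ)+2) * L (m+1+1) + C ((m:ℝ)+1) * L m := by
  ext k
  have hfact : ∀ i : ℕ, ((Nat.factorial i : ℝ)) ≠ 0 := fun i => by positivity
  rcases k with _ | j
  · simp only [coeff_add, coeff_sub, sub_mul, Polynomial.mul_coeff_zero, coeff_X_zero,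
      coeff_C_mul, coeff_C, coeff_L, coeff_derivative, zero_mul, mul_zero]
    simp [Nat.choose_zero_right, Nat.choose_one_right, Nat.factorial]
    ring
  · simp only [coeff_add, coeff_sub, sub_mul, coeff_X_mul, coeff_C_mul, coeff_L,
      coeff_derivative, one_mul]
    rw [hB m (j+1)]
    rw [show (m+1+1).choose (j+1) = (m+1).choose j + (m+1).choose (j+1) from Nat.choose_succ_succ _ _]
    push_cast
    rw [show ((j:ℝ)+1+1) = (j:ℝ)+2 from by ring]
    rw [hA (m+1) (j+1), hA (m+1) j]
    rw [Nat.factorial_succ (j+1), Nat.factorial_succ j]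
    have h1 : ((j:ℝ)+1) ≠ 0 := by positivity
    have h2 : ((j:ℝ)+2) ≠ 0 := by positivity
    have h3 : ((m:ℝ)+1) ≠ 0 := by positivity
    have h4 := hfact j
    push_cast
    field_simp
    ring

lemma laguerre_eq (n : ℕ) : laguerre n = fun x => (L n).eval x := by
  funext x
  unfold laguerre L
  rw [Polynomial.eval_finset_sum]
  refine Finset.sum_congr rfl fun j hj => ?_
  have hjn : j ≤ n := by simpa [Nat.lt_succ_iff] using hj
  rw [Nat.choose_symm hjn]
  simp only [Polynomial.eval_mul, Polynomial.eval_C, Polynomial.eval_pow, Polynomial.eval_X]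
  rw [neg_pow]
  ring

lemma deriv_L (n : ℕ) : deriv (laguerre n) = fun x => (Polynomial.derivative (L n)).eval x := by
  rw [laguerre_eq]
  funext x
  exact Polynomial.deriv _

lemma deriv2_L (n : ℕ) :
    deriv (deriv (laguerre n)) = fun x => (Polynomial.derivative (Polynomial.derivative (L n))).eval x := by
  rw [deriv_L]
  funext x
  exact Polynomial.deriv _

end LaguerreAux

/-- Laguerre polynomial identity:
`(2 − x) L_n − 4x L_n'' + 4(x − 1) L_n' = (1+2n) L_n + (n+1) L_{n+1} + n L_{n−1}`.
(The term `n · L_{n−1}` vanishes for `n = 0`, implementing the convention `L_{−1} = 0`.) -/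
theorem laguerre_identity (n : ℕ) (x : ℝ) :
    (2 - x) * laguerre n x - 4 * x * deriv (deriv (laguerre n)) x +
        4 * (x - 1) * deriv (laguerre n) x =
      (1 + 2 * (n : ℝ)) * laguerre n x + ((n : ℝ) + 1) * laguerre (n + 1) x +
        (n : ℝ) * laguerre (n - 1) x := by
  open LaguerreAux in
  rcases n with _ | m
  · have h0 : laguerre 0 = fun _ : ℝ => (1:ℝ) := by
      funext y; simp [laguerre]
    rw [h0]
    simp only [deriv_const']
    simp [laguerre, Finset.sum_range_succ]
    ring
  · have hk := congrArg (fun p => Polynomial.eval x p) (key m)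
    simp only [Polynomial.eval_add, Polynomial.eval_sub, Polynomial.eval_mul, Polynomial.eval_C,
      Polynomial.eval_X] at hk
    simp only [Nat.add_sub_cancel]
    rw [deriv2_L (m+1), deriv_L (m+1), laguerre_eq (m+1), laguerre_eq (m+1+1), laguerre_eq m]
    beta_reduce
    push_cast
    linarith [hk]
end
end
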